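/- Let ν₁ and ν₂ be measures on ℝ^d, each satisfying the scaling property ∫ f(y) ν_j(dy) = a^{-α} ∫ f(ay) ν_j(dy) for all measurable f ≥ 0 supported in B₁, for the same a > 1 and α ∈ (0,2). Fix λ < 1 ≤ η with η = a^k for some integer k, and define the measure ν₁ ♥ ν₂ by ∫ f d(ν₁ ♥ ν₂) = ∬ (f·1_{B₂})(η(y+z)) g(y,z) ν₁(dy) ν₂(dz), where g(y,z) = (2-α)^{-1} |y+z|^α 1_{A_{|y+z|}}(y) 1_{A_{|y+z|}}(z) and A_r = B_{ηr} \ B_{λr}. Then ν₁ ♥ ν₂ satisfies the same scaling property: ∫ f(y) (ν₁♥ν₂)(dy) = a^{-α} ∫ f(ay) (ν₁♥ν₂)(dy) for all measurable f ≥ 0 supported in B₁. -/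

import Mathlib

open MeasureTheory Metric
open scoped ENNReal

/-- The kernel `g_λ^η(y,z) = (2-α)^{-1} |y+z|^α 1_{A_{|y+z|}}(y) 1_{A_{|y+z|}}(z)`,
where `A_r = B(0,ηr) \ B(0,λr)`. -/
noncomputable def heartKernel {d : ℕ} (α lam η : ℝ)
    (y z : EuclideanSpace ℝ (Fin d)) : ℝ :=
  if (lam * ‖y + z‖ ≤ ‖y‖ ∧ ‖y‖ < η * ‖y + z‖) ∧
      (lam * ‖y + z‖ ≤ ‖z‖ ∧ ‖z‖ < η * ‖y + z‖) then
    (2 - α)⁻¹ * ‖y + z‖ ^ α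
  else 0

/-- The integral of `f` against the heart-convolution `ν₁ ♥ ν₂`:
`∬ (f·1_{B₂})(η(y+z)) g_λ^η(y,z) ν₁(dy) ν₂(dz)`. -/
noncomputable def heartLintegral {d : ℕ} (α lam η : ℝ)
    (ν₁ ν₂ : Measure (EuclideanSpace ℝ (Fin d)))
    (f : EuclideanSpace ℝ (Fin d) → ℝ≥0∞) : ℝ≥0∞ :=
  ∫⁻ y, ∫⁻ z,
    (ball (0 : EuclideanSpace ℝ (Fin d)) 2).indicator f (η • (y + z)) *
      ENNReal.ofReal (heartKernel α lam η y z) ∂ν₂ ∂ν₁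

/-!
The scaling identity for `ν₁ ♥ ν₂` is obtained by applying the scaling property of `ν₂` to the
inner integral and that of `ν₁` to the outer one. This is legitimate because the integrand
vanishes unless `|y|, |z| < η|y+z| ≤ 1`, and because the scaling property, once known for
measurable functions supported in `B₁`, extends to all functions supported in `B₁` (it is an
identity of the restricted measures). Rescaling `(y, z) ↦ (ay, az)` multiplies the kernel by
`a^α`, which cancels the two factors `a^{-α}` down to one.
-/

section Scaling

variable {X : Type*} [MeasurableSpace X]

/-- The scaling property (S) of the paper, for a general map `T` in place of `y ↦ a • y`. -/
def HasScalingOn (ν : Measure X) (s : Set X) (T : X → X) (c : ℝ≥0∞) : Prop :=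
  ∀ f : X → ℝ≥0∞, Measurable f → (∀ x, x ∉ s → f x = 0) →
    ∫⁻ y, f y ∂ν = c * ∫⁻ y, f (T y) ∂ν

variable {ν : Measure X} {s : Set X} {T : X → X} {c : ℝ≥0∞}

theorem HasScalingOn.restrict_eq (h : HasScalingOn ν s T c) (hs : MeasurableSet s)
    (hT : Measurable T) : ν.restrict s = c • (ν.map T).restrict s := by
  ext t ht
  have hts : MeasurableSet (t ∩ s) := ht.inter hs
  have key := h ((t ∩ s).indicator 1) (measurable_one.indicator hts)
    (fun x hx => Set.indicator_of_notMem (fun hxts => hx hxts.2) _)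
  have hpre : (fun y => (t ∩ s).indicator (1 : X → ℝ≥0∞) (T y)) = (T ⁻¹' (t ∩ s)).indicator 1 :=
    funext fun y => (Set.indicator_comp_right T (g := (1 : X → ℝ≥0∞)) (x := y)).symm
  rw [lintegral_indicator_one hts, hpre, lintegral_indicator_one (hT hts)] at key
  rwa [Measure.restrict_apply ht, Measure.smul_apply, Measure.restrict_apply ht,
    Measure.map_apply hT hts, smul_eq_mul]

theorem HasScalingOn.lintegral_eq (h : HasScalingOn ν s T c) (hs : MeasurableSet s)
    (hT : MeasurableEmbedding T) (F : X → ℝ≥0∞) (hF : ∀ x, x ∉ s → F x = 0) :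
    ∫⁻ y, F y ∂ν = c * ∫⁻ y, F (T y) ∂ν := by
  have hsupp : F.support ⊆ s := Function.support_subset_iff'.2 hF
  rw [← setLIntegral_eq_of_support_subset hsupp, h.restrict_eq hs hT.measurable,
    lintegral_smul_measure, smul_eq_mul, setLIntegral_eq_of_support_subset hsupp,
    hT.lintegral_map]

theorem HasScalingOn.lintegral_lintegral_eq {ν₁ ν₂ : Measure X} (h₁ : HasScalingOn ν₁ s T c)
    (h₂ : HasScalingOn ν₂ s T c) (hs : MeasurableSet s) (hT : MeasurableEmbedding T)
    (hc : c ≠ ∞) (F : X → X → ℝ≥0∞) (hF : ∀ y z, y ∉ s ∨ z ∉ s → F y z = 0) :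
    ∫⁻ y, ∫⁻ z, F y z ∂ν₂ ∂ν₁ = c * c * ∫⁻ y, ∫⁻ z, F (T y) (T z) ∂ν₂ ∂ν₁ := by
  have inner : ∀ y, ∫⁻ z, F y z ∂ν₂ = c * ∫⁻ z, F y (T z) ∂ν₂ := fun y =>
    h₂.lintegral_eq hs hT (F y) fun z hz => hF y z (Or.inr hz)
  have outer := h₁.lintegral_eq hs hT (fun y => ∫⁻ z, F y (T z) ∂ν₂) fun y hy => by
    simp only [hF y _ (Or.inl hy), lintegral_zero]
  simp_rw [inner, lintegral_const_mul' c _ hc, outer, mul_assoc]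

end Scaling

theorem indicator_ball_comp_smul {E : Type*} [NormedAddCommGroup E] [NormedSpace ℝ E]
    {a r : ℝ} (ha : 1 ≤ a) (hr : 1 ≤ r) {f : E → ℝ≥0∞} (hf : ∀ x, x ∉ ball (0 : E) 1 → f x = 0)
    (w : E) :
    (ball (0 : E) r).indicator (fun x => f (a • x)) w = (ball (0 : E) r).indicator f (a • w) := by
  have hnorm : ‖w‖ ≤ ‖a • w‖ := by
    rw [norm_smul, Real.norm_of_nonneg (by linarith)]
    exact le_mul_of_one_le_left (norm_nonneg w) ha
  by_cases hw : w ∈ ball (0 : E) r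
  · by_cases haw : a • w ∈ ball (0 : E) r
    · rw [Set.indicator_of_mem hw, Set.indicator_of_mem haw]
    · rw [Set.indicator_of_mem hw, Set.indicator_of_notMem haw]
      exact hf _ fun h1 => haw (ball_subset_ball hr h1)
  · have haw : a • w ∉ ball (0 : E) r := fun haw => hw (by
      rw [mem_ball_zero_iff] at haw ⊢
      exact hnorm.trans_lt haw)
    rw [Set.indicator_of_notMem hw, Set.indicator_of_notMem haw]

section Heart

variable {d : ℕ} (α lam η : ℝ)

theorem heartKernel_smul {a : ℝ} (ha : 0 < a) (y z : EuclideanSpace ℝ (Fin d)) :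
    heartKernel α lam η (a • y) (a • z) = a ^ α * heartKernel α lam η y z := by
  have hn : ∀ w : EuclideanSpace ℝ (Fin d), ‖a • w‖ = a * ‖w‖ := fun w => by
    rw [norm_smul, Real.norm_of_nonneg ha.le]
  have hle : ∀ r s : ℝ, lam * (a * r) ≤ a * s ↔ lam * r ≤ s := fun r s => by
    rw [mul_left_comm]; exact mul_le_mul_iff_right₀ ha
  have hlt : ∀ r s : ℝ, a * s < η * (a * r) ↔ s < η * r := fun r s => by
    rw [mul_left_comm η a]; exact mul_lt_mul_iff_right₀ ha
  unfold heartKernel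
  simp only [← smul_add, hn, hle, hlt]
  split_ifs
  · rw [Real.mul_rpow ha.le (norm_nonneg _)]; ring
  · rw [mul_zero]

noncomputable def heartIntegrand (f : EuclideanSpace ℝ (Fin d) → ℝ≥0∞)
    (y z : EuclideanSpace ℝ (Fin d)) : ℝ≥0∞ :=
  (ball (0 : EuclideanSpace ℝ (Fin d)) 2).indicator f (η • (y + z)) *
    ENNReal.ofReal (heartKernel α lam η y z)

theorem heartLintegral_eq (ν₁ ν₂ : Measure (EuclideanSpace ℝ (Fin d)))
    (f : EuclideanSpace ℝ (Fin d) → ℝ≥0∞) :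
    heartLintegral α lam η ν₁ ν₂ f = ∫⁻ y, ∫⁻ z, heartIntegrand α lam η f y z ∂ν₂ ∂ν₁ :=
  rfl

theorem heartIntegrand_eq_zero {f : EuclideanSpace ℝ (Fin d) → ℝ≥0∞}
    (hf : ∀ x, x ∉ ball (0 : EuclideanSpace ℝ (Fin d)) 1 → f x = 0)
    (y z : EuclideanSpace ℝ (Fin d))
    (h : y ∉ ball (0 : EuclideanSpace ℝ (Fin d)) 1 ∨ z ∉ ball 0 1) :
    heartIntegrand α lam η f y z = 0 := by
  unfold heartIntegrand heartKernel
  split_ifs with hyz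
  · have hη : η * ‖y + z‖ ≤ ‖η • (y + z)‖ := by
      rw [norm_smul, Real.norm_eq_abs]
      exact mul_le_mul_of_nonneg_right (le_abs_self η) (norm_nonneg _)
    have hfar : 1 ≤ ‖η • (y + z)‖ := by
      simp only [mem_ball_zero_iff, not_lt] at h
      rcases h with h | h
      · exact (h.trans_lt (hyz.1.2.trans_le hη)).le
      · exact (h.trans_lt (hyz.2.2.trans_le hη)).le
    rw [Set.indicator_apply_eq_zero.2 fun _ => hf _ (by simpa using hfar), zero_mul]
  · rw [ENNReal.ofReal_zero, mul_zero]

theorem heartIntegrand_smul {a : ℝ} (ha : 1 < a) {f : EuclideanSpace ℝ (Fin d) → ℝ≥0∞}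
    (hf : ∀ x, x ∉ ball (0 : EuclideanSpace ℝ (Fin d)) 1 → f x = 0)
    (y z : EuclideanSpace ℝ (Fin d)) :
    heartIntegrand α lam η f (a • y) (a • z) =
      ENNReal.ofReal (a ^ α) * heartIntegrand α lam η (fun x => f (a • x)) y z := by
  have ha0 : 0 < a := one_pos.trans ha
  have hsmul : η • (a • y + a • z) = a • (η • (y + z)) := by rw [← smul_add, smul_comm]
  unfold heartIntegrand
  rw [heartKernel_smul α lam η ha0, hsmul, ← indicator_ball_comp_smul ha.le one_le_two hf,
    ENNReal.ofReal_mul (Real.rpow_nonneg ha0.le α)]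
  ring

end Heart

theorem stmt_14 {d : ℕ} (ν₁ ν₂ : Measure (EuclideanSpace ℝ (Fin d)))
    (α a lam η : ℝ) (ha : 1 < a)
    (hS₁ : ∀ f : EuclideanSpace ℝ (Fin d) → ℝ≥0∞, Measurable f →
      (∀ x, x ∉ ball (0 : EuclideanSpace ℝ (Fin d)) 1 → f x = 0) →
      ∫⁻ y, f y ∂ν₁ = ENNReal.ofReal (a ^ (-α)) * ∫⁻ y, f (a • y) ∂ν₁)
    (hS₂ : ∀ f : EuclideanSpace ℝ (Fin d) → ℝ≥0∞, Measurable f →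
      (∀ x, x ∉ ball (0 : EuclideanSpace ℝ (Fin d)) 1 → f x = 0) →
      ∫⁻ y, f y ∂ν₂ = ENNReal.ofReal (a ^ (-α)) * ∫⁻ y, f (a • y) ∂ν₂) :
    ∀ f : EuclideanSpace ℝ (Fin d) → ℝ≥0∞, Measurable f →
      (∀ x, x ∉ ball (0 : EuclideanSpace ℝ (Fin d)) 1 → f x = 0) →
      heartLintegral α lam η ν₁ ν₂ f =
        ENNReal.ofReal (a ^ (-α)) *
          heartLintegral α lam η ν₁ ν₂ (fun x => f (a • x)) := by
  intro f _ hf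
  have ha0 : 0 < a := one_pos.trans ha
  set c := ENNReal.ofReal (a ^ (-α))
  have hcancel : c * ENNReal.ofReal (a ^ α) = 1 := by
    rw [← ENNReal.ofReal_mul (Real.rpow_nonneg ha0.le _), ← Real.rpow_add ha0,
      neg_add_cancel, Real.rpow_zero, ENNReal.ofReal_one]
  have hcancel' : c * (c * ENNReal.ofReal (a ^ α)) = c := by rw [hcancel, mul_one]
  rw [heartLintegral_eq, heartLintegral_eq,
    HasScalingOn.lintegral_lintegral_eq hS₁ hS₂ measurableSet_ball
      (measurableEmbedding_const_smul₀ ha0.ne') ENNReal.ofReal_ne_top _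
      (heartIntegrand_eq_zero α lam η hf)]
  simp_rw [heartIntegrand_smul α lam η ha hf, lintegral_const_mul' _ _ ENNReal.ofReal_ne_top,
    ← mul_assoc, mul_assoc c c, hcancel']
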